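/- arXiv:0910.2085 — 2 statements merged into one kernel-verified Lean document; each statement's English description precedes it below -/
import Mathlib

section
/- If f ∈ 𝒜 is a differential polynomial such that f·g ∈ ∂𝒜 for every g ∈ 𝒜, then f = 0. -/
/-!
Take `N` above the order of `f` and write `f · (u^{j,N})² = ∂k`. The total derivative raises the
top order by exactly one: if `u^{i,M}` is a variable of `k` of maximal order `M`, then
`∂_{i,M+1} ∂k = ∂_{i,M} k ≠ 0`. Hence `k` has order `< N`, and
`∂_{j,N}² ∂k = ∂_{j,N} ∂_{j,N-1} k = 0`, whereas `∂_{j,N}² (f · (u^{j,N})²) = 2f`.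
-/

open MvPolynomial

/-- The differential polynomial algebra `𝒜` in the variables `u^{i,s}`,
`1 ≤ i ≤ n`, `s ≥ 0`. -/
abbrev DP (n : ℕ) : Type := MvPolynomial (Fin n × ℕ) ℝ

/-- The total derivative `∂ = Σ u^{i,s+1} ∂_{i,s}` (on each differential
polynomial only finitely many terms act nontrivially). -/
noncomputable def totalDer {n : ℕ} (f : DP n) : DP n :=
  ∑ v ∈ f.vars, X (v.1, v.2 + 1) * pderiv v f

/-- A bound such that `∂_{i,k} f = 0` for all `k ≥ vbound f`. -/
noncomputable def vbound {n : ℕ} (f : DP n) : ℕ := (f.vars.sup (fun v => v.2)) + 1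

/-- The higher generalized momentum operator
`p_{i,α,s} = Σ_{t≥0} (-1)^t C(t+s,s) ∂^t ∘ ∂_{i,α+s+t}`; the sum is finite on each
differential polynomial, and is truncated at a sufficiently large bound. -/
noncomputable def pmom {n : ℕ} (i : Fin n) (α s : ℕ) (f : DP n) : DP n :=
  ∑ t ∈ Finset.range (vbound f),
    ((-1 : ℝ) ^ t * (Nat.choose (t + s) s : ℝ)) • totalDer^[t] (pderiv (i, α + s + t) f)

/-- The higher energy operator `E_s = Σ_{α≥1} u^{i,α} p_{i,α,s}`. -/
noncomputable def Eop {n : ℕ} (s : ℕ) (f : DP n) : DP n :=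
  ∑ i : Fin n, ∑ α ∈ Finset.Icc 1 (vbound f), X (i, α) * pmom i α s f

/-- The energy operator `E = E₀ - 1`. -/
noncomputable def Ener {n : ℕ} (f : DP n) : DP n := Eop 0 f - f

namespace MvPolynomial

variable {R σ : Type*}

theorem pderiv_pderiv_comm [CommRing R] (i j : σ) (p : MvPolynomial σ R) :
    pderiv i (pderiv j p) = pderiv j (pderiv i p) := by
  classical
  have hbracket : ⁅pderiv i, pderiv j⁆ = (0 : Derivation R (MvPolynomial σ R) _) :=
    derivation_ext fun k => by
      rw [Derivation.commutator_apply, pderiv_X, pderiv_X]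
      simp only [Pi.single_apply]
      split_ifs <;> simp
  simpa [Derivation.commutator_apply, sub_eq_zero] using congr($hbracket p)

theorem pderiv_ne_zero_of_mem_vars [CommSemiring R] [NoZeroDivisors R] [CharZero R]
    {i : σ} {p : MvPolynomial σ R} (h : i ∈ p.vars) : pderiv i p ≠ 0 := by
  classical
  obtain ⟨d, hd, hdi⟩ := (mem_vars_iff_mem_support i).mp h
  have hd_eq : d - Finsupp.single i 1 + Finsupp.single i 1 = d :=
    tsub_add_cancel_of_le (Finsupp.single_le_iff.mpr (Nat.one_le_iff_ne_zero.mpr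
      (Finsupp.mem_support_iff.mp hdi)))
  intro h0
  have hcoeff := coeff_pderiv (i := i) p (d - Finsupp.single i 1)
  rw [h0, coeff_zero, hd_eq] at hcoeff
  exact mul_ne_zero (mem_support_iff.mp hd) (Nat.cast_add_one_ne_zero _) hcoeff.symm

theorem pderiv_pderiv_mul_X_sq [CommSemiring R] {i : σ} {f : MvPolynomial σ R}
    (hf : pderiv i f = 0) : pderiv i (pderiv i (f * X i ^ 2)) = 2 * f := by
  have h2 : pderiv i (2 : MvPolynomial σ R) = 0 := by
    rw [← map_ofNat C 2, pderiv_C]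
  simp [hf, h2, mul_comm]

end MvPolynomial

section TotalDerivative

variable {n : ℕ}

lemma pderiv_eq_zero_of_vars_snd_lt {p : DP n} {N : ℕ} (hp : ∀ v ∈ p.vars, v.2 < N)
    (i : Fin n) {s : ℕ} (hs : N ≤ s) : pderiv (i, s) p = 0 :=
  pderiv_eq_zero_of_notMem_vars fun hmem => by have := hp _ hmem; omega

lemma totalDer_eq_sum_of_vars_subset (k : DP n) {S : Finset (Fin n × ℕ)} (hS : k.vars ⊆ S) :
    totalDer k = ∑ v ∈ S, X (v.1, v.2 + 1) * pderiv v k :=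
  Finset.sum_subset hS fun _ _ hv => by rw [pderiv_eq_zero_of_notMem_vars hv, mul_zero]

@[simp]
lemma totalDer_zero : totalDer (0 : DP n) = 0 := by
  simp [totalDer]

lemma pderiv_X_succ (i j : Fin n) (s t : ℕ) :
    pderiv (i, s + 1) (X (j, t + 1) : DP n) = if (j, t) = (i, s) then 1 else 0 := by
  classical
  simp [pderiv_X, Pi.single_apply]

lemma pderiv_succ_totalDer (k : DP n) (i : Fin n) (s : ℕ) :
    pderiv (i, s + 1) (totalDer k) = totalDer (pderiv (i, s + 1) k) + pderiv (i, s) k := by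
  classical
  set S := insert (i, s) (k.vars ∪ (pderiv (i, s + 1) k).vars)
  have hk : k.vars ⊆ S := fun v hv => by simp [S, hv]
  have hk' : (pderiv (i, s + 1) k).vars ⊆ S := fun v hv => by simp [S, hv]
  rw [totalDer_eq_sum_of_vars_subset k hk, totalDer_eq_sum_of_vars_subset _ hk', map_sum]
  simp only [pderiv_mul, pderiv_X_succ, ite_mul, one_mul, zero_mul, Finset.sum_add_distrib,
    Finset.sum_ite_eq', pderiv_pderiv_comm (i, s + 1)]
  rw [if_pos (Finset.mem_insert_self _ _), add_comm]

lemma vars_snd_lt_of_totalDer {k : DP n} {N : ℕ} (hN : ∀ w ∈ (totalDer k).vars, w.2 ≤ N) :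
    ∀ v ∈ k.vars, v.2 < N := by
  intro v hv
  obtain ⟨w, hw, hw_max⟩ := Finset.exists_max_image k.vars Prod.snd ⟨v, hv⟩
  suffices hmem : (w.1, w.2 + 1) ∈ (totalDer k).vars by
    have := hN _ hmem
    have := hw_max v hv
    omega
  by_contra hnot
  have hk_top : pderiv (w.1, w.2 + 1) k = 0 :=
    pderiv_eq_zero_of_vars_snd_lt (fun u hu => Nat.lt_succ_of_le (hw_max u hu)) _ le_rfl
  have hcomm := pderiv_succ_totalDer k w.1 w.2
  rw [pderiv_eq_zero_of_notMem_vars hnot, hk_top, totalDer_zero, zero_add] at hcomm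
  exact pderiv_ne_zero_of_mem_vars hw hcomm.symm

lemma pderiv_pderiv_totalDer_eq_zero {k : DP n} {s : ℕ} (hk : ∀ v ∈ k.vars, v.2 < s + 1)
    (i : Fin n) : pderiv (i, s + 1) (pderiv (i, s + 1) (totalDer k)) = 0 := by
  have hk_top : pderiv (i, s + 1) k = 0 := pderiv_eq_zero_of_vars_snd_lt hk i le_rfl
  rw [pderiv_succ_totalDer, hk_top, totalDer_zero, zero_add, pderiv_pderiv_comm, hk_top,
    map_zero]

end TotalDerivative

/-- If `f·g ∈ ∂𝒜` for every differential polynomial `g`, then `f = 0`. -/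
theorem stmt7 {n : ℕ} (f : DP n)
    (h : ∀ g : DP n, ∃ k : DP n, f * g = totalDer k) : f = 0 := by
  rcases isEmpty_or_nonempty (Fin n) with hn | ⟨⟨j⟩⟩
  · obtain ⟨k, hk⟩ := h 1
    simpa [totalDer, Finset.eq_empty_of_isEmpty k.vars] using hk
  set s := f.vars.sup Prod.snd
  have hf : ∀ v ∈ f.vars, v.2 < s + 1 := fun v hv => Nat.lt_succ_of_le (Finset.le_sup hv)
  obtain ⟨k, hk⟩ := h (X (j, s + 1) ^ 2)
  have hprod_vars : ∀ w ∈ (f * X (j, s + 1) ^ 2).vars, w.2 ≤ s + 1 := by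
    intro w hw
    rcases Finset.mem_union.mp (vars_mul _ _ hw) with hw | hw
    · exact (hf w hw).le
    · have hw_X := vars_pow _ _ hw
      rw [vars_X, Finset.mem_singleton] at hw_X
      rw [hw_X]
  have h2f := pderiv_pderiv_mul_X_sq (pderiv_eq_zero_of_vars_snd_lt hf j le_rfl)
  rw [hk, pderiv_pderiv_totalDer_eq_zero (vars_snd_lt_of_totalDer (hk ▸ hprod_vars)) j] at h2f
  simpa using h2f.symm
end

section
/- Let D be a first order differential operator on 𝒜 satisfying D ∘ ∂ = ∂ ∘ (D − D(1)·id). Then for every f ∈ 𝒜, D(f) − (X^i δ_i(f) − a·E(f)) ∈ ∂𝒜, where a = D(1) and X^i = (D − a·id)(u^i). Explicitly, D has the form D = a + Σ_{i,s} X^{i,s} ∂_{i,s} with X^{i,s} = ∂^s(X^i) − Σ_{t=1}^{s} ∂^{s−t}(a·u^{i,t}). -/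
/-! Applying `D ∘ ∂ = ∂ ∘ (D - a)` to `u^{i,s}` gives the recursion
`X^{i,s+1} = ∂ X^{i,s} - a u^{i,s+1}`, whose solution is the explicit formula for `X^{i,s}`.
Substituting it into `D f = a f + Σ X^{i,s} ∂_{i,s} f` and reindexing the double sum, every term
becomes `∂^r g · ∂_{i,α+r} f` with `g = X^i` (`α = 0`) or `g = a u^{i,α}` (`α ≥ 1`). Integration by
parts, `∂^r g · h ≡ (-1)^r g ∂^r h` modulo `∂𝒜`, collects these into `X^i p_{i,0,0} f = X^i δ_i f`
and `a u^{i,α} p_{i,α,0} f`, and the latter sum to `a E₀ f = a (E f + f)`. -/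

open MvPolynomial

/-- The first order differential operator `D = a·id + Σ_{i,s} X^{i,s} ∂_{i,s}`
determined by the data `a ∈ 𝒜`, `X^{i,s} ∈ 𝒜` (the sum is finite on each
differential polynomial). -/
noncomputable def Dop {n : ℕ} (a : DP n) (Xc : Fin n → ℕ → DP n) (f : DP n) : DP n :=
  a * f + ∑ᶠ v : Fin n × ℕ, Xc v.1 v.2 * pderiv v f

namespace MvPolynomial

variable {σ R : Type*} [CommSemiring R]

theorem derivation_apply_eq_sum_pderiv (D : Derivation R (MvPolynomial σ R) (MvPolynomial σ R))
    (f : MvPolynomial σ R) : D f = ∑ v ∈ f.vars, D (X v) * pderiv v f := by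
  let D' : Derivation R (MvPolynomial σ R) (MvPolynomial σ R) :=
    ∑ v ∈ f.vars, D (X v) • pderiv v
  have hD' : ∀ g, D' g = ∑ v ∈ f.vars, D (X v) * pderiv v g := fun g => by
    rw [← Derivation.coeFnAddMonoidHom_apply, map_sum, Finset.sum_apply]
    simp only [Derivation.coeFnAddMonoidHom_apply, Derivation.smul_apply, smul_eq_mul]
  rw [← hD']
  refine derivation_eq_of_forall_mem_vars fun w hw => ?_
  rw [hD', Finset.sum_eq_single w (fun v _ hvw => by rw [pderiv_X_of_ne hvw.symm, mul_zero])
    (fun hw' => absurd hw hw'), pderiv_X_self, mul_one]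

end MvPolynomial

namespace Derivation

variable {R A : Type*} [CommRing R] [CommRing A] [Algebra R A]

theorem iterate_mul_smodEq (D : Derivation R A A) (t : ℕ) (g h : A) :
    D^[t] g * h ≡ (-1 : R) ^ t • (g * D^[t] h) [SMOD LinearMap.range (D : A →ₗ[R] A)] := by
  induction t generalizing h with
  | zero => simp
  | succ t ih =>
    have hexact : D (D^[t] g * h) ≡ 0 [SMOD LinearMap.range (D : A →ₗ[R] A)] :=
      SModEq.zero.mpr (LinearMap.mem_range_self _ _)
    convert hexact.sub (ih (D h)) using 1
    · rw [leibniz, smul_eq_mul, smul_eq_mul, Function.iterate_succ_apply']; ring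
    · rw [Function.iterate_succ_apply, pow_succ, mul_neg_one, neg_smul, zero_sub]

end Derivation

theorem Finset.sum_range_sum_Icc_sub {M : Type*} [AddCommMonoid M] (F : ℕ → ℕ → M) (N : ℕ) :
    ∑ s ∈ range N, ∑ t ∈ Icc 1 s, F t (s - t) = ∑ t ∈ Icc 1 N, ∑ r ∈ range (N - t), F t r := by
  induction N with
  | zero => simp
  | succ N ih =>
    have hlast : ∀ t ∈ Icc 1 N, ∑ r ∈ range (N + 1 - t), F t r
        = ∑ r ∈ range (N - t), F t r + F t (N - t) := fun t ht => by
      rw [Nat.sub_add_comm (mem_Icc.mp ht).2, sum_range_succ]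
    rw [sum_range_succ, ih, sum_Icc_succ_top (Nat.le_add_left 1 N), Nat.sub_self, sum_range_zero,
      add_zero, sum_congr rfl hlast, sum_add_distrib]

theorem eq_iterate_sub_sum_of_succ_eq {M F : Type*} [AddCommGroup M] [FunLike F M M]
    [AddMonoidHomClass F M M] (L : F) {x y : ℕ → M} (h : ∀ s, x (s + 1) = L (x s) - y (s + 1))
    (s : ℕ) : x s = L^[s] (x 0) - ∑ t ∈ Finset.Icc 1 s, L^[s - t] (y t) := by
  induction s with
  | zero => simp
  | succ s ih =>
    have hshift : ∀ t ∈ Finset.Icc 1 s, L (L^[s - t] (y t)) = L^[s + 1 - t] (y t) := fun t ht => by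
      rw [← Function.iterate_succ_apply' L, Nat.succ_sub (Finset.mem_Icc.mp ht).2]
    rw [h, ih, map_sub, map_sum, Finset.sum_congr rfl hshift,
      Finset.sum_Icc_succ_top (Nat.le_add_left 1 s), Nat.sub_self, Function.iterate_zero_apply,
      ← Function.iterate_succ_apply' L]
    abel

noncomputable def totalDerivation (n : ℕ) : Derivation ℝ (DP n) (DP n) :=
  mkDerivation ℝ fun v => X (v.1, v.2 + 1)

noncomputable abbrev totalDerRange (n : ℕ) : Submodule ℝ (DP n) :=
  LinearMap.range (totalDerivation n : DP n →ₗ[ℝ] DP n)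

section DifferentialPolynomials

variable {n : ℕ}

theorem coe_totalDerivation : ⇑(totalDerivation n) = totalDer := by
  ext f : 1
  rw [derivation_apply_eq_sum_pderiv, totalDer]
  simp only [totalDerivation, mkDerivation_X]

theorem totalDer_X (v : Fin n × ℕ) : totalDer (X v : DP n) = X (v.1, v.2 + 1) := by
  rw [← coe_totalDerivation, totalDerivation, mkDerivation_X]

theorem pderiv_eq_zero_of_vbound_le (f : DP n) (i : Fin n) {k : ℕ} (hk : vbound f ≤ k) :
    pderiv (i, k) f = 0 := by
  refine pderiv_eq_zero_of_notMem_vars fun hmem => ?_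
  have : k ≤ f.vars.sup (fun v => v.2) := Finset.le_sup (f := fun v : Fin n × ℕ => v.2) hmem
  rw [vbound] at hk
  omega

theorem Dop_X (a : DP n) (Xc : Fin n → ℕ → DP n) (w : Fin n × ℕ) :
    Dop a Xc (X w) = a * X w + Xc w.1 w.2 := by
  rw [Dop, finsum_eq_single _ w fun v hv => by rw [pderiv_X_of_ne hv.symm, mul_zero],
    pderiv_X_self, mul_one]

theorem Dop_eq_sum_range (a : DP n) (Xc : Fin n → ℕ → DP n) (f : DP n) :
    Dop a Xc f = a * f + ∑ i, ∑ s ∈ Finset.range (vbound f), Xc i s * pderiv (i, s) f := by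
  rw [Dop, finsum_eq_sum_of_support_subset (s := Finset.univ ×ˢ Finset.range (vbound f)),
    Finset.sum_product]
  rintro ⟨i, k⟩ hv
  by_contra hk
  simp only [Finset.coe_product, Finset.coe_univ, Set.mem_prod, Set.mem_univ, true_and,
    Finset.mem_coe, Finset.mem_range, not_lt] at hk
  exact hv (by simp only [pderiv_eq_zero_of_vbound_le f i hk, mul_zero])

variable {a : DP n} {Xc : Fin n → ℕ → DP n}

theorem coeff_succ_eq_of_commute
    (hD : ∀ f : DP n, Dop a Xc (totalDer f) = totalDer (Dop a Xc f - a * f)) (i : Fin n) (s : ℕ) :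
    Xc i (s + 1) = totalDer (Xc i s) - a * X (i, s + 1) := by
  have h := hD (X (i, s))
  rw [totalDer_X, Dop_X, Dop_X, add_sub_cancel_left] at h
  rw [← h]
  ring

theorem coeff_eq_of_commute
    (hD : ∀ f : DP n, Dop a Xc (totalDer f) = totalDer (Dop a Xc f - a * f)) (i : Fin n) (s : ℕ) :
    Xc i s = totalDer^[s] (Xc i 0) - ∑ t ∈ Finset.Icc 1 s, totalDer^[s - t] (a * X (i, t)) := by
  rw [← coe_totalDerivation]
  refine eq_iterate_sub_sum_of_succ_eq (totalDerivation n) (fun s => ?_) s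
  rw [coe_totalDerivation]
  exact coeff_succ_eq_of_commute hD i s

theorem sum_iterate_mul_pderiv_smodEq (g f : DP n) (i : Fin n) (α : ℕ) :
    ∑ r ∈ Finset.range (vbound f), totalDer^[r] g * pderiv (i, α + r) f
      ≡ g * pmom i α 0 f [SMOD totalDerRange n] := by
  rw [pmom, Finset.mul_sum]
  refine SModEq.sum fun r _ => ?_
  rw [← coe_totalDerivation]
  simpa [mul_smul_comm] using (totalDerivation n).iterate_mul_smodEq r g (pderiv (i, α + r) f)

theorem sum_range_sum_Icc_mul_pderiv (b : ℕ → ℕ → DP n) (f : DP n) (i : Fin n) :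
    ∑ s ∈ Finset.range (vbound f), ∑ t ∈ Finset.Icc 1 s, b t (s - t) * pderiv (i, s) f
      = ∑ t ∈ Finset.Icc 1 (vbound f), ∑ r ∈ Finset.range (vbound f),
          b t r * pderiv (i, t + r) f := by
  have hsplit : ∀ s ∈ Finset.range (vbound f), ∀ t ∈ Finset.Icc 1 s,
      b t (s - t) * pderiv (i, s) f = b t (s - t) * pderiv (i, t + (s - t)) f :=
    fun s _ t ht => by rw [Nat.add_sub_cancel' (Finset.mem_Icc.mp ht).2]
  rw [Finset.sum_congr rfl fun s hs => Finset.sum_congr rfl (hsplit s hs),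
    Finset.sum_range_sum_Icc_sub (fun t r => b t r * pderiv (i, t + r) f)]
  refine Finset.sum_congr rfl fun t _ => Finset.sum_subset (by simp) fun r _ hr => ?_
  rw [pderiv_eq_zero_of_vbound_le f i (by simp at hr; omega), mul_zero]

theorem Dop_smodEq_of_coeff_eq
    (hcoeff : ∀ i s, Xc i s =
      totalDer^[s] (Xc i 0) - ∑ t ∈ Finset.Icc 1 s, totalDer^[s - t] (a * X (i, t)))
    (f : DP n) :
    Dop a Xc f ≡ (∑ i, Xc i 0 * pmom i 0 0 f) - a * Ener f
      [SMOD totalDerRange n] := by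
  have hcomponent : ∀ i, ∑ s ∈ Finset.range (vbound f), Xc i s * pderiv (i, s) f
      ≡ Xc i 0 * pmom i 0 0 f - ∑ α ∈ Finset.Icc 1 (vbound f), a * (X (i, α) * pmom i α 0 f)
      [SMOD totalDerRange n] := fun i => by
    conv_lhs => enter [2, s]; rw [hcoeff i s]
    simp_rw [sub_mul, Finset.sum_mul, Finset.sum_sub_distrib,
      sum_range_sum_Icc_mul_pderiv (fun t r => totalDer^[r] (a * X (i, t))), ← mul_assoc]
    refine SModEq.sub ?_ (SModEq.sum fun α _ => sum_iterate_mul_pderiv_smodEq _ f i α)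
    simpa using sum_iterate_mul_pderiv_smodEq (Xc i 0) f i 0
  have hEnergy : a * Ener f = ∑ i, ∑ α ∈ Finset.Icc 1 (vbound f), a * (X (i, α) * pmom i α 0 f)
      - a * f := by
    simp only [Ener, Eop, mul_sub, Finset.mul_sum]
  rw [Dop_eq_sum_range, hEnergy, add_comm]
  convert (SModEq.sum fun i _ => hcomponent i).add (SModEq.refl (a * f)) using 1
  rw [Finset.sum_sub_distrib]
  abel

end DifferentialPolynomials

/-- If a first order differential operator `D` satisfies `D∘∂ = ∂∘(D - D(1)·id)`,
then `D(f) ≡ Σ_i X^i δ_i(f) - a E(f) mod ∂𝒜` where `a = D(1)`, `X^i = (D - a·id)(u^i) = X^{i,0}`,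
and explicitly `X^{i,s} = ∂^s(X^i) - Σ_{t=1}^s ∂^{s-t}(a·u^{i,t})`. -/
theorem stmt8 {n : ℕ} (a : DP n) (Xc : Fin n → ℕ → DP n)
    (hD : ∀ f : DP n, Dop a Xc (totalDer f) = totalDer (Dop a Xc f - a * f)) :
    (∀ f : DP n, ∃ g : DP n,
      Dop a Xc f - ((∑ i : Fin n, Xc i 0 * pmom i 0 0 f) - a * Ener f) = totalDer g) ∧
    (∀ (i : Fin n) (s : ℕ),
      Xc i s = totalDer^[s] (Xc i 0)
        - ∑ t ∈ Finset.Icc 1 s, totalDer^[s - t] (a * X (i, t))) := by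
  have hcoeff := coeff_eq_of_commute hD
  refine ⟨fun f => ?_, hcoeff⟩
  obtain ⟨g, hg⟩ := SModEq.sub_mem.mp (Dop_smodEq_of_coeff_eq hcoeff f)
  exact ⟨g, by rw [← hg, Derivation.coeFn_coe, coe_totalDerivation]⟩
end
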